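/- For every integer r ≥ 1, define for t ∈ ℚ(q) the rational function F(t) = t·(1 + (q^2+q+1)(q^(3r+1) + q^(3r) − 2q^(2r+1) + q − 1)) + ((q−1)^r − t)(q^2+q+1)(3q^(3r+1) + 3q^(3r) − 2q^(2r+2) − 4q^(2r+1) + q^3) + (2t − 3(q−1)^r + (q−1)^(2r))(q+1)(q^2+q+1)(q^r−q)(q^2 + q^(2r) − q^(r+1)) + (2t − 2(q−1)^r + (q−1)^(2r) − (q^2−1)^r)·q·(q^2+q+1)(q^r−q)(q^r−q^2) + (2t − 4(q−1)^r + (q−1)^(2r) + (q^2−1)^r)·q^2·(q^2+q+1)(q^r−1)(q^r−q) + (1/6)q^3((q−1)^(2r) − 3(q^2−1)^r + 2(q^2+q+1)^r + 2q(q+1)(3t − 3(q−1)^r + (q−1)^(2r) − (q^2+q+1)^r)) + (1/6)q^6(−6(q−1)^r + (q−1)^(2r) + 3(q^2−1)^r + 2(q^2+q+1)^r). Then F(3^r) = F(1); equivalently, F(t) is independent of t. (This proves that the E-polynomial of the reducible locus of representations of F_r in PGL(3,ℂ), obtained by substituting t = 1, equals that for SL(3,ℂ), obtained by substituting t = 3^r.)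 -/

import Mathlib

/-- The variable `q`, viewed as a rational function in `ℚ(q)`. -/
noncomputable def q : RatFunc ℚ := RatFunc.X

/-- The E-polynomial of the reducible locus of representations of `F_r`,
written as a function of the parameter `t` (with `t = 3^r` giving the
`SL(3,ℂ)` case and `t = 1` giving the `PGL(3,ℂ)` case). -/
noncomputable def F (r : ℕ) (t : RatFunc ℚ) : RatFunc ℚ :=
  t * (1 + (q^2 + q + 1) * (q^(3*r+1) + q^(3*r) - 2 * q^(2*r+1) + q - 1))
    + ((q - 1)^r - t) * (q^2 + q + 1)
      * (3 * q^(3*r+1) + 3 * q^(3*r) - 2 * q^(2*r+2) - 4 * q^(2*r+1) + q^3)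
    + (2 * t - 3 * (q - 1)^r + (q - 1)^(2*r)) * (q + 1) * (q^2 + q + 1)
      * (q^r - q) * (q^2 + q^(2*r) - q^(r+1))
    + (2 * t - 2 * (q - 1)^r + (q - 1)^(2*r) - (q^2 - 1)^r) * q
      * (q^2 + q + 1) * (q^r - q) * (q^r - q^2)
    + (2 * t - 4 * (q - 1)^r + (q - 1)^(2*r) + (q^2 - 1)^r) * q^2
      * (q^2 + q + 1) * (q^r - 1) * (q^r - q)
    + (1/6) * q^3 * ((q - 1)^(2*r) - 3 * (q^2 - 1)^r + 2 * (q^2 + q + 1)^r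
        + 2 * q * (q + 1)
          * (3 * t - 3 * (q - 1)^r + (q - 1)^(2*r) - (q^2 + q + 1)^r))
    + (1/6) * q^6 * (-6 * (q - 1)^r + (q - 1)^(2*r) + 3 * (q^2 - 1)^r
        + 2 * (q^2 + q + 1)^r)

/- `F r t` is affine in `t` and its `t`-coefficient vanishes identically; the only division is by
the numeral `6`, which `ring` handles because `ℚ(q)` has characteristic zero. -/
theorem F_apply_eq (r : ℕ) (t s : RatFunc ℚ) : F r t = F r s := by
  unfold F
  ring

theorem e_reducible_pgl3_eq_sl3_general (r : ℕ) :
    F r (3^r) = F r 1 :=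
  F_apply_eq r _ _

/-- The E-polynomial of the reducible locus of representations of `F_r` in
`PGL(3,ℂ)` (obtained at `t = 1`) equals that for `SL(3,ℂ)` (at `t = 3^r`). -/
theorem e_reducible_pgl3_eq_sl3 (r : ℕ) (hr : 1 ≤ r) :
    F r (3^r) = F r 1 :=
  e_reducible_pgl3_eq_sl3_general r
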